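/- MAX-CUT recurrence (Lemma 1 of the paper): Let Q be a finite multiset of reals with all elements ≤ m, let c be a natural number, let y ≥ m, and let p, q, r, t be natural numbers with p + q = |Q| + c. Define MAXCUT_i(p, q, r, t) as the maximum of cut(A, B) over all partitions A + B = Q + c·{m} + (r + t)·{y} with |A| = p + r such that exactly r of the added copies of y are placed in A, and define MAXCUT_{i−1}(p', q', r', t') analogously for the multiset Q + (r' + t')·{m}, i.e. as the maximum of cut(A, B) over all partitions A + B = Q + (r' + t')·{m} with |A| = p' + r' such that exactly r' of the added copies of m are placed in A. Then MAXCUT_i(p, q, r, t) = (y − m)·(p·t + q·r) + max over natural numbers r₀ ≤ p, t₀ ≤ q with r₀ + t₀ = c of MAXCUT_{i−1}(p − r₀, q − t₀, r₀ + r, t₀ + t). -/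

import Mathlib

noncomputable def cut (A B : Multiset ℝ) : ℝ :=
  (A.map (fun a => (B.map (fun b => |a - b|)).sum)).sum

lemma cut_add_left (A A' B : Multiset ℝ) : cut (A + A') B = cut A B + cut A' B := by
  simp [cut]

lemma cut_add_right (A B B' : Multiset ℝ) : cut A (B + B') = cut A B + cut A B' := by
  simp [cut, Multiset.sum_map_add]

lemma cut_rep_right (A : Multiset ℝ) (n : ℕ) (x : ℝ) :
    cut A (Multiset.replicate n x) = n * (A.map (fun a => |a - x|)).sum := by
  simp only [cut, Multiset.map_replicate, Multiset.sum_replicate, nsmul_eq_mul]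
  rw [← Multiset.sum_map_mul_left]

lemma cut_rep_left (B : Multiset ℝ) (n : ℕ) (x : ℝ) :
    cut (Multiset.replicate n x) B = n * (B.map (fun b => |x - b|)).sum := by
  simp [cut, Multiset.map_replicate, Multiset.sum_replicate, nsmul_eq_mul]

lemma sum_abs_shift (A : Multiset ℝ) (m y : ℝ) (hA : ∀ z ∈ A, z ≤ m) (hmy : m ≤ y) :
    (A.map (fun a => |a - y|)).sum
      = (Multiset.card A : ℝ) * (y - m) + (A.map (fun a => |a - m|)).sum := by
  have h : A.map (fun a => |a - y|) = A.map (fun a => (y - m) + |a - m|) := by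
    apply Multiset.map_congr rfl
    intro z hz
    have hz' := hA z hz
    rw [abs_sub_comm z y, abs_of_nonneg (by linarith), abs_sub_comm z m,
      abs_of_nonneg (by linarith)]
    ring
  rw [h, Multiset.sum_map_add]
  simp [Multiset.map_const', Multiset.sum_replicate, nsmul_eq_mul]

lemma keyval (A B : Multiset ℝ) (m y : ℝ) (hA : ∀ z ∈ A, z ≤ m) (hB : ∀ z ∈ B, z ≤ m)
    (hmy : m ≤ y) (r t : ℕ) :
    cut (A + Multiset.replicate r y) (B + Multiset.replicate t y)
      = (y - m) * ((Multiset.card A : ℝ) * t + (Multiset.card B : ℝ) * r)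
        + cut (A + Multiset.replicate r m) (B + Multiset.replicate t m) := by
  have hBy : (B.map (fun b => |y - b|)).sum
      = (Multiset.card B : ℝ) * (y - m) + (B.map (fun b => |m - b|)).sum := by
    have := sum_abs_shift B m y hB hmy
    simpa [abs_sub_comm] using this
  simp only [cut_add_left, cut_add_right, cut_rep_left, cut_rep_right, Multiset.map_add,
    Multiset.sum_add, Multiset.map_replicate, Multiset.sum_replicate, sub_self, abs_zero,
    smul_zero, add_zero]
  rw [sum_abs_shift A m y hA hmy, hBy]
  ring

lemma decomp (Q : Multiset ℝ) (m : ℝ) :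
    ∀ (c : ℕ) (A B : Multiset ℝ), A + B = Q + Multiset.replicate c m →
    ∃ A₁ B₁ r₀ t₀, A₁ + B₁ = Q ∧ r₀ + t₀ = c ∧
      A = A₁ + Multiset.replicate r₀ m ∧ B = B₁ + Multiset.replicate t₀ m := by
  intro c
  induction c with
  | zero => intro A B h; exact ⟨A, B, 0, 0, by simpa using h, rfl, by simp, by simp⟩
  | succ n ih =>
    intro A B h
    have hm : m ∈ A + B := by
      rw [h]; exact Multiset.mem_add.2 (Or.inr (Multiset.mem_replicate.2 ⟨by omega, rfl⟩))
    rcases Multiset.mem_add.1 hm with hmA | hmB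
    · obtain ⟨A', rfl⟩ := Multiset.exists_cons_of_mem hmA
      have h' : A' + B = Q + Multiset.replicate n m := by
        have h2 : m ::ₘ (A' + B) = m ::ₘ (Q + Multiset.replicate n m) := by
          rw [← Multiset.cons_add, h, Multiset.replicate_succ, Multiset.add_cons]
        exact (Multiset.cons_inj_right m).1 h2
      obtain ⟨A₁, B₁, r₀, t₀, h1, h2, h3, h4⟩ := ih A' B h'
      exact ⟨A₁, B₁, r₀ + 1, t₀, h1, by omega, by
        rw [h3, Multiset.replicate_succ]; simp [Multiset.add_cons], h4⟩
    · obtain ⟨B', rfl⟩ := Multiset.exists_cons_of_mem hmB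
      have h' : A + B' = Q + Multiset.replicate n m := by
        have h2 : m ::ₘ (A + B') = m ::ₘ (Q + Multiset.replicate n m) := by
          rw [← Multiset.add_cons, h, Multiset.replicate_succ, Multiset.add_cons]
        exact (Multiset.cons_inj_right m).1 h2
      obtain ⟨A₁, B₁, r₀, t₀, h1, h2, h3, h4⟩ := ih A B' h'
      exact ⟨A₁, B₁, r₀, t₀ + 1, h1, by omega, h3, by
        rw [h4, Multiset.replicate_succ]; simp [Multiset.add_cons]⟩

lemma split_exists (Q : Multiset ℝ) (k : ℕ) (hk : k ≤ Multiset.card Q) :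
    ∃ A B : Multiset ℝ, A + B = Q ∧ Multiset.card A = k := by
  refine ⟨(Q.toList.take k : List ℝ), (Q.toList.drop k : List ℝ), ?_, ?_⟩
  · have h2 := congrArg (fun l : List ℝ => (l : Multiset ℝ)) (List.take_append_drop k Q.toList)
    set_option linter.unnecessarySimpa false in
    simpa [Multiset.coe_toList] using h2
  · simp only [Multiset.coe_card, List.length_take, Multiset.length_toList]
    omega

lemma csSup_const_add (k : ℝ) (S : Set ℝ) (hne : S.Nonempty) (hbd : BddAbove S) :
    sSup ((fun w => k + w) '' S) = k + sSup S := by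
  have hlub := isLUB_csSup hne hbd
  apply IsLUB.csSup_eq _ (hne.image _)
  constructor
  · rintro x ⟨w, hw, rfl⟩
    exact add_le_add_right (hlub.1 hw) k
  · intro u hu
    have : sSup S ≤ u - k := by
      apply csSup_le hne
      intro w hw
      have h2 : k + w ≤ u := hu ⟨w, hw, rfl⟩
      linarith
    linarith

theorem maxcut_recurrence (Q : Multiset ℝ) (m y : ℝ)
    (hQ : ∀ z ∈ Q, z ≤ m) (hmy : m ≤ y)
    (c p q r t : ℕ) (hpq : p + q = Multiset.card Q + c)
    (MAXCUTi MAXCUTprev : ℕ → ℕ → ℕ → ℕ → ℝ)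
    (hMi : ∀ p' q' r' t', MAXCUTi p' q' r' t' =
      sSup {v : ℝ | ∃ A₀ B₀ : Multiset ℝ,
        A₀ + B₀ = Q + Multiset.replicate c m ∧
        Multiset.card A₀ = p' ∧ Multiset.card B₀ = q' ∧
        v = cut (A₀ + Multiset.replicate r' y) (B₀ + Multiset.replicate t' y)})
    (hMp : ∀ p' q' r' t', MAXCUTprev p' q' r' t' =
      sSup {v : ℝ | ∃ A₀ B₀ : Multiset ℝ,
        A₀ + B₀ = Q ∧
        Multiset.card A₀ = p' ∧ Multiset.card B₀ = q' ∧
        v = cut (A₀ + Multiset.replicate r' m) (B₀ + Multiset.replicate t' m)}) :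
    MAXCUTi p q r t = (y - m) * ((p : ℝ) * t + (q : ℝ) * r) +
      sSup {v : ℝ | ∃ r₀ t₀ : ℕ, r₀ ≤ p ∧ t₀ ≤ q ∧ r₀ + t₀ = c ∧
        v = MAXCUTprev (p - r₀) (q - t₀) (r₀ + r) (t₀ + t)} := by
  set K : ℝ := (y - m) * ((p : ℝ) * t + (q : ℝ) * r) with hK
  set T : Set ℝ := {v : ℝ | ∃ A₁ B₁ : Multiset ℝ, ∃ r₀ t₀ : ℕ,
    A₁ + B₁ = Q ∧ r₀ ≤ p ∧ t₀ ≤ q ∧ r₀ + t₀ = c ∧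
    Multiset.card A₁ = p - r₀ ∧ Multiset.card B₁ = q - t₀ ∧
    v = cut (A₁ + Multiset.replicate (r₀ + r) m) (B₁ + Multiset.replicate (t₀ + t) m)}
    with hT
  set Tin : ℕ → ℕ → Set ℝ := fun r₀ t₀ => {v : ℝ | ∃ A₀ B₀ : Multiset ℝ,
        A₀ + B₀ = Q ∧
        Multiset.card A₀ = p - r₀ ∧ Multiset.card B₀ = q - t₀ ∧
        v = cut (A₀ + Multiset.replicate (r₀ + r) m) (B₀ + Multiset.replicate (t₀ + t) m)}
    with hTin
  -- T is finite
  have hTfin : T.Finite := by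
    have hfin : ({s : Multiset ℝ | s ≤ Q} ×ˢ Set.Iic c).Finite := by
      apply Set.Finite.prod _ (Set.finite_Iic c)
      apply Set.Finite.subset Q.powerset.toFinset.finite_toSet
      intro s hs
      exact Multiset.mem_toFinset.2 (Multiset.mem_powerset.2 hs)
    apply Set.Finite.subset (hfin.image (fun pr : Multiset ℝ × ℕ =>
      cut (pr.1 + Multiset.replicate (pr.2 + r) m)
          ((Q - pr.1) + Multiset.replicate ((c - pr.2) + t) m)))
    rintro v ⟨A₁, B₁, r₀, t₀, hAB, hr₀, ht₀, hrt, hcA, hcB, rfl⟩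
    refine ⟨(A₁, r₀), ⟨?_, Set.mem_Iic.2 (by omega)⟩, ?_⟩
    · exact le_of_le_of_eq (Multiset.le_add_right A₁ B₁) hAB
    · have hBs : Q - A₁ = B₁ := by rw [← hAB]; exact add_tsub_cancel_left A₁ B₁
      have hct : c - r₀ = t₀ := by omega
      simp only [hBs, hct]
  have hTbdd : BddAbove T := hTfin.bddAbove
  -- a valid pair (r₀, t₀) exists
  obtain ⟨r₀', t₀', hv1, hv2, hv3⟩ : ∃ r₀ t₀ : ℕ, r₀ ≤ p ∧ t₀ ≤ q ∧ r₀ + t₀ = c := by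
    rcases le_total p c with h | h
    · exact ⟨p, c - p, le_refl p, by omega, by omega⟩
    · exact ⟨c, 0, h, by omega, by omega⟩
  have hTinsub : ∀ r₀ t₀ : ℕ, r₀ ≤ p → t₀ ≤ q → r₀ + t₀ = c → Tin r₀ t₀ ⊆ T := by
    rintro r₀ t₀ h1 h2 h3 v ⟨A₀, B₀, hAB, hcA, hcB, rfl⟩
    exact ⟨A₀, B₀, r₀, t₀, hAB, h1, h2, h3, hcA, hcB, rfl⟩
  have hTinne : ∀ r₀ t₀ : ℕ, r₀ ≤ p → t₀ ≤ q → r₀ + t₀ = c → (Tin r₀ t₀).Nonempty := by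
    intro r₀ t₀ h1 h2 h3
    obtain ⟨A₁, B₁, hAB, hcA⟩ := split_exists Q (p - r₀) (by omega)
    have hcB : Multiset.card B₁ = q - t₀ := by
      have hc := congrArg Multiset.card hAB
      rw [Multiset.card_add] at hc
      omega
    exact ⟨_, A₁, B₁, hAB, hcA, hcB, rfl⟩
  have hTne : T.Nonempty := by
    obtain ⟨v, hv⟩ := hTinne r₀' t₀' hv1 hv2 hv3
    exact ⟨v, hTinsub _ _ hv1 hv2 hv3 hv⟩
  set S2 : Set ℝ := {v : ℝ | ∃ r₀ t₀ : ℕ, r₀ ≤ p ∧ t₀ ≤ q ∧ r₀ + t₀ = c ∧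
    v = MAXCUTprev (p - r₀) (q - t₀) (r₀ + r) (t₀ + t)} with hS2
  have hS2fin : S2.Finite := by
    apply Set.Finite.subset ((Set.finite_Iic c).image
      (fun r₀ => MAXCUTprev (p - r₀) (q - (c - r₀)) (r₀ + r) ((c - r₀) + t)))
    rintro v ⟨r₀, t₀, h1, h2, h3, rfl⟩
    refine ⟨r₀, Set.mem_Iic.2 (by omega), ?_⟩
    have hct : c - r₀ = t₀ := by omega
    simp only [hct]
  have hS2ne : S2.Nonempty := ⟨_, r₀', t₀', hv1, hv2, hv3, rfl⟩
  have hTS2 : sSup T = sSup S2 := by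
    apply le_antisymm
    · apply csSup_le hTne
      rintro w ⟨A₁, B₁, r₀, t₀, hAB, h1, h2, h3, hcA, hcB, rfl⟩
      have hw : _ ∈ Tin r₀ t₀ := ⟨A₁, B₁, hAB, hcA, hcB, rfl⟩
      have hle1 : cut (A₁ + Multiset.replicate (r₀ + r) m) (B₁ + Multiset.replicate (t₀ + t) m)
          ≤ MAXCUTprev (p - r₀) (q - t₀) (r₀ + r) (t₀ + t) := by
        rw [hMp]
        exact le_csSup (hTfin.subset (hTinsub r₀ t₀ h1 h2 h3)).bddAbove hw
      have hle2 : MAXCUTprev (p - r₀) (q - t₀) (r₀ + r) (t₀ + t) ≤ sSup S2 :=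
        le_csSup hS2fin.bddAbove ⟨r₀, t₀, h1, h2, h3, rfl⟩
      linarith
    · apply csSup_le hS2ne
      rintro v ⟨r₀, t₀, h1, h2, h3, rfl⟩
      rw [hMp]
      exact csSup_le_csSup hTbdd (hTinne r₀ t₀ h1 h2 h3) (hTinsub r₀ t₀ h1 h2 h3)
  have hS1 : {v : ℝ | ∃ A₀ B₀ : Multiset ℝ,
        A₀ + B₀ = Q + Multiset.replicate c m ∧
        Multiset.card A₀ = p ∧ Multiset.card B₀ = q ∧
        v = cut (A₀ + Multiset.replicate r y) (B₀ + Multiset.replicate t y)}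
      = (fun w => K + w) '' T := by
    ext v
    constructor
    · rintro ⟨A₀, B₀, hAB, hcA, hcB, rfl⟩
      obtain ⟨A₁, B₁, r₀, t₀, hABQ, hrt, rfl, rfl⟩ := decomp Q m c A₀ B₀ hAB
      have hA₁Q : A₁ ≤ Q := le_of_le_of_eq (Multiset.le_add_right A₁ B₁) hABQ
      have hB₁Q : B₁ ≤ Q := le_of_le_of_eq (Multiset.le_add_left B₁ A₁) hABQ
      have hAm : ∀ z ∈ A₁ + Multiset.replicate r₀ m, z ≤ m := by
        intro z hz
        rcases Multiset.mem_add.1 hz with h | h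
        · exact hQ z (Multiset.mem_of_le hA₁Q h)
        · rw [Multiset.eq_of_mem_replicate h]
      have hBm : ∀ z ∈ B₁ + Multiset.replicate t₀ m, z ≤ m := by
        intro z hz
        rcases Multiset.mem_add.1 hz with h | h
        · exact hQ z (Multiset.mem_of_le hB₁Q h)
        · rw [Multiset.eq_of_mem_replicate h]
      rw [Multiset.card_add, Multiset.card_replicate] at hcA hcB
      have eA : A₁ + Multiset.replicate (r₀ + r) m
          = A₁ + Multiset.replicate r₀ m + Multiset.replicate r m := by
        rw [Multiset.replicate_add, add_assoc]
      have eB : B₁ + Multiset.replicate (t₀ + t) m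
          = B₁ + Multiset.replicate t₀ m + Multiset.replicate t m := by
        rw [Multiset.replicate_add, add_assoc]
      refine ⟨cut (A₁ + Multiset.replicate (r₀ + r) m) (B₁ + Multiset.replicate (t₀ + t) m),
        ⟨A₁, B₁, r₀, t₀, hABQ, by omega, by omega, hrt, by omega, by omega, rfl⟩, ?_⟩
      rw [keyval _ _ m y hAm hBm hmy r t, eA, eB, hK,
        Multiset.card_add, Multiset.card_replicate, Multiset.card_add,
        Multiset.card_replicate, hcA, hcB]
    · rintro ⟨w, ⟨A₁, B₁, r₀, t₀, hABQ, h1, h2, h3, hcA, hcB, rfl⟩, rfl⟩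
      have hAm : ∀ z ∈ A₁ + Multiset.replicate r₀ m, z ≤ m := by
        intro z hz
        rcases Multiset.mem_add.1 hz with h | h
        · exact hQ z (Multiset.mem_of_le
            (le_of_le_of_eq (Multiset.le_add_right A₁ B₁) hABQ) h)
        · rw [Multiset.eq_of_mem_replicate h]
      have hBm : ∀ z ∈ B₁ + Multiset.replicate t₀ m, z ≤ m := by
        intro z hz
        rcases Multiset.mem_add.1 hz with h | h
        · exact hQ z (Multiset.mem_of_le
            (le_of_le_of_eq (Multiset.le_add_left B₁ A₁) hABQ) h)
        · rw [Multiset.eq_of_mem_replicate h]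
      have eA : A₁ + Multiset.replicate (r₀ + r) m
          = A₁ + Multiset.replicate r₀ m + Multiset.replicate r m := by
        rw [Multiset.replicate_add, add_assoc]
      have eB : B₁ + Multiset.replicate (t₀ + t) m
          = B₁ + Multiset.replicate t₀ m + Multiset.replicate t m := by
        rw [Multiset.replicate_add, add_assoc]
      refine ⟨A₁ + Multiset.replicate r₀ m, B₁ + Multiset.replicate t₀ m, ?_, ?_, ?_, ?_⟩
      · rw [add_add_add_comm, hABQ, ← Multiset.replicate_add, h3]
      · rw [Multiset.card_add, Multiset.card_replicate, hcA]; omega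
      · rw [Multiset.card_add, Multiset.card_replicate, hcB]; omega
      · rw [keyval _ _ m y hAm hBm hmy r t, ← eA, ← eB, hK,
          Multiset.card_add, Multiset.card_replicate, Multiset.card_add,
          Multiset.card_replicate, hcA, hcB,
          show p - r₀ + r₀ = p from by omega, show q - t₀ + t₀ = q from by omega]
  rw [hMi, hS1, csSup_const_add K T hTne hTbdd, hTS2]
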